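/- Let π be the spike-and-slab prior on ℝ^T: a binary vector γ with exactly S nonzero entries is drawn uniformly from all such vectors, and conditionally θ_t = 0 if γ_t = 0 and θ_t ∼ Uniform([−C_B, C_B]) if γ_t = 1. Let θ* have support of size at most S with |θ*_t| + s_n ≤ C_B on its support, and let q_n* be the distribution with γ*_t = 1{θ*_t ≠ 0} and θ_t ∼ Uniform([θ*_t − s_n, θ*_t + s_n]) on the support, θ_t = 0 otherwise. Then KL(q_n*, π) ≤ S log(T C_B) + (S/2) log(1/s_n²). -/

import Mathlib

open MeasureTheory Finset
open scoped Classical ENNReal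

/-- Uniform probability measure on the interval `[a, b]`. -/
noncomputable def unifIcc (a b : ℝ) : Measure ℝ :=
  (ENNReal.ofReal (b - a))⁻¹ • (volume.restrict (Set.Icc a b))

/-!
Coordinatewise, each uniform law `U([θ*_t - s_n, θ*_t + s_n])` is at most `C_B / s_n` times the
slab `U([-C_B, C_B])`, so `q_n*` is at most `(C_B / s_n)^S` times the slab product with the support
pattern `γ* = 1{θ* ≠ 0}`. That product is one of the `T.choose S ≤ T^S` equally weighted
components of `π`, hence `q_n* ≤ (C_B / s_n)^S T^S • π`. The density `dq_n*/dπ` is then bounded by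
this constant `q_n*`-a.e., and the KL divergence by its logarithm.
-/

open scoped NNReal

namespace MeasureTheory.Measure

theorem pi_mono_fin {n : ℕ} {α : Fin n → Type*} [∀ i, MeasurableSpace (α i)]
    {μ ν : ∀ i, Measure (α i)} [∀ i, SigmaFinite (μ i)] [∀ i, SigmaFinite (ν i)]
    (h : ∀ i, μ i ≤ ν i) : Measure.pi μ ≤ Measure.pi ν := by
  induction n with
  | zero => rw [pi_of_empty, pi_of_empty]
  | succ n ih =>
    let e := MeasurableEquiv.piFinSuccAbove α 0
    calc Measure.pi μ = ((Measure.pi μ).map e).map e.symm := e.map_symm_map.symm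
      _ ≤ ((Measure.pi ν).map e).map e.symm := by
        refine map_mono ?_ e.symm.measurable
        rw [(measurePreserving_piFinSuccAbove μ 0).map_eq,
          (measurePreserving_piFinSuccAbove ν 0).map_eq]
        exact prod_mono (h 0) (ih fun i => h _)
      _ = Measure.pi ν := e.map_symm_map

section Pi

variable {ι : Type*} [Fintype ι] {α : ι → Type*} [∀ i, MeasurableSpace (α i)]

theorem pi_mono {μ ν : ∀ i, Measure (α i)} [∀ i, SigmaFinite (μ i)] [∀ i, SigmaFinite (ν i)]
    (h : ∀ i, μ i ≤ ν i) : Measure.pi μ ≤ Measure.pi ν := by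
  let e := (Fintype.equivFin ι).symm
  rw [← pi_map_piCongrLeft e μ, ← pi_map_piCongrLeft e ν]
  exact map_mono (pi_mono_fin fun i => h (e i)) (MeasurableEquiv.measurable _)

theorem pi_nnreal_smul (c : ι → ℝ≥0) (μ : ∀ i, Measure (α i)) [∀ i, SigmaFinite (μ i)] :
    Measure.pi (fun i => c i • μ i) = (∏ i, c i) • Measure.pi μ := by
  refine pi_eq fun s _ => ?_
  simp only [smul_apply, pi_pi, prod_mul_distrib, ENNReal.smul_def,
    ENNReal.ofNNReal_finsetProd, smul_eq_mul]

theorem pi_le_prod_smul_pi {μ ν : ∀ i, Measure (α i)} [∀ i, SigmaFinite (μ i)]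
    [∀ i, SigmaFinite (ν i)] {c : ι → ℝ≥0} (h : ∀ i, μ i ≤ c i • ν i) :
    Measure.pi μ ≤ (∏ i, c i) • Measure.pi ν := by
  rw [← pi_nnreal_smul c ν]
  exact pi_mono h

end Pi

variable {α : Type*} [MeasurableSpace α]

instance isFiniteMeasure_ite {p : Prop} [Decidable p] {μ ν : Measure α} [IsFiniteMeasure μ]
    [IsFiniteMeasure ν] : IsFiniteMeasure (if p then μ else ν) := by
  split_ifs <;> infer_instance

instance isProbabilityMeasure_ite {p : Prop} [Decidable p] {μ ν : Measure α}
    [IsProbabilityMeasure μ] [IsProbabilityMeasure ν] :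
    IsProbabilityMeasure (if p then μ else ν) := by
  split_ifs <;> infer_instance

theorem le_card_smul_inv_card_smul_sum {ι : Type*} {s : Finset ι} {i : ι} (hi : i ∈ s)
    (μ : ι → Measure α) : μ i ≤ (#s : ℝ≥0∞) • ((#s : ℝ≥0∞)⁻¹ • ∑ j ∈ s, μ j) := by
  rw [smul_smul, ENNReal.mul_inv_cancel (by simpa using ne_empty_of_mem hi)
    (ENNReal.natCast_ne_top _), one_smul]
  exact single_le_sum (fun j _ => (μ j).zero_le) hi

theorem isProbabilityMeasure_inv_card_smul_sum {ι : Type*} {s : Finset ι} (hs : s.Nonempty)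
    (μ : ι → Measure α) [∀ i, IsProbabilityMeasure (μ i)] :
    IsProbabilityMeasure ((#s : ℝ≥0∞)⁻¹ • ∑ j ∈ s, μ j) := by
  constructor
  simp [ENNReal.inv_mul_cancel, hs.ne_empty]

theorem rnDeriv_le_of_le_smul {μ ν : Measure α} [SigmaFinite ν] {c : ℝ≥0∞} (h : μ ≤ c • ν) :
    μ.rnDeriv ν ≤ᵐ[ν] fun _ => c :=
  ae_le_of_forall_setLIntegral_le_of_sigmaFinite (μ.measurable_rnDeriv ν) fun s _ _ => by
    rw [setLIntegral_const]
    exact (setLIntegral_rnDeriv_le s).trans (h s)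

end MeasureTheory.Measure

theorem integral_log_rnDeriv_le_of_le_smul {α : Type*} [MeasurableSpace α] {μ ν : Measure α}
    [IsProbabilityMeasure μ] [SigmaFinite ν] {c : ℝ≥0} (hc : 1 ≤ c) (h : μ ≤ c • ν) :
    ∫ x, Real.log (μ.rnDeriv ν x).toReal ∂μ ≤ Real.log c := by
  -- `1 ≤ c` also covers the junk values: `Real.log 0 = 0` where the density vanishes, and
  -- `∫ = 0` when the integrand is not integrable.
  have hlog_nonneg : 0 ≤ Real.log c := Real.log_nonneg (by exact_mod_cast hc)
  have hbound : ∀ᵐ x ∂μ, Real.log (μ.rnDeriv ν x).toReal ≤ Real.log c := by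
    filter_upwards [(Measure.absolutelyContinuous_of_le_smul h).ae_le
      (Measure.rnDeriv_le_of_le_smul h)] with x hx
    rcases (ENNReal.toReal_nonneg (a := μ.rnDeriv ν x)).eq_or_lt with h0 | h0
    · rwa [← h0, Real.log_zero]
    · exact Real.log_le_log h0 (ENNReal.toReal_le_of_le_ofReal c.coe_nonneg (by simpa using hx))
  by_cases hint : Integrable (fun x => Real.log (μ.rnDeriv ν x).toReal) μ
  · simpa using integral_mono_ae hint (integrable_const (Real.log c)) hbound
  · rwa [integral_undef hint]

instance isFiniteMeasure_unifIcc (a b : ℝ) : IsFiniteMeasure (unifIcc a b) := by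
  constructor
  simpa [unifIcc] using (ENNReal.inv_mul_le_one _).trans_lt ENNReal.one_lt_top

theorem isProbabilityMeasure_unifIcc {a b : ℝ} (h : a < b) :
    IsProbabilityMeasure (unifIcc a b) := by
  constructor
  simp [unifIcc, ENNReal.inv_mul_cancel, h]

theorem unifIcc_le_smul {a b A B : ℝ} (hab : a < b) (hA : A ≤ a) (hB : b ≤ B) :
    unifIcc a b ≤ ((B - A) / (b - a)).toNNReal • unifIcc A B := by
  have hcoef : (((B - A) / (b - a)).toNNReal : ℝ≥0∞) * (ENNReal.ofReal (B - A))⁻¹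
      = (ENNReal.ofReal (b - a))⁻¹ := by
    rw [← ENNReal.ofReal.eq_def, ENNReal.ofReal_div_of_pos (by linarith), div_eq_mul_inv,
      mul_right_comm, ENNReal.mul_inv_cancel (by simp; linarith) ENNReal.ofReal_ne_top, one_mul]
  rw [← Measure.coe_nnreal_smul, unifIcc, unifIcc, smul_smul, hcoef]
  gcongr

theorem unifIcc_sub_add_le_smul {x r R : ℝ} (hr : 0 < r) (h : |x| + r ≤ R) :
    unifIcc (x - r) (x + r) ≤ (R / r).toNNReal • unifIcc (-R) R := by
  have hratio : (R - -R) / (x + r - (x - r)) = R / r := by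
    rw [show R - -R = 2 * R by ring, show x + r - (x - r) = 2 * r by ring,
      mul_div_mul_left _ _ two_ne_zero]
  obtain ⟨hxl, hxu⟩ := abs_le.1 (le_sub_iff_add_le.2 h)
  rw [← hratio]
  exact unifIcc_le_smul (by linarith) (by linarith) (by linarith)

theorem pi_ite_unifIcc_le_pow_smul_pi {ι : Type*} [Fintype ι] {θ : ι → ℝ} {r R : ℝ}
    (hr : 0 < r) (hθ : ∀ t, θ t ≠ 0 → |θ t| + r ≤ R) :
    Measure.pi (fun t => if θ t = 0 then Measure.dirac 0 else unifIcc (θ t - r) (θ t + r))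
      ≤ (R / r).toNNReal ^ #{t | θ t ≠ 0}
        • Measure.pi (fun t => if θ t ≠ 0 then unifIcc (-R) R else Measure.dirac 0) := by
  have hcomp : ∀ t, (if θ t = 0 then Measure.dirac 0 else unifIcc (θ t - r) (θ t + r))
      ≤ (if θ t = 0 then 1 else (R / r).toNNReal)
        • (if θ t ≠ 0 then unifIcc (-R) R else Measure.dirac 0) := by
    intro t
    by_cases ht : θ t = 0
    · simp [ht]
    · simpa [ht] using unifIcc_sub_add_le_smul hr (hθ t ht)
  calc _ ≤ (∏ t, if θ t = 0 then 1 else (R / r).toNNReal) • _ :=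
        Measure.pi_le_prod_smul_pi hcomp
    _ = _ := by rw [prod_ite, prod_const_one, one_mul, prod_const]

theorem card_filter_card_eq_choose {ι : Type*} [Fintype ι] [DecidableEq ι] (S : ℕ) :
    #{γ : ι → Bool | #{t | γ t = true} = S} = (Fintype.card ι).choose S := by
  rw [← card_univ, ← card_powersetCard]
  refine card_nbij' (fun γ => univ.filter (fun t => γ t = true)) (fun s t => decide (t ∈ s))
    ?_ ?_ ?_ ?_ <;> intro x hx <;> simp_all [mem_powersetCard]

theorem log_div_pow_mul_le {C s N T : ℝ} {S : ℕ} (hC : 0 < C) (hs : 0 < s) (hT : 0 < T)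
    (hN : 0 < N) (hNT : N ≤ T ^ S) :
    Real.log ((C / s) ^ S * N) ≤ S * Real.log (T * C) + (S / 2) * Real.log (1 / s ^ 2) := by
  calc Real.log ((C / s) ^ S * N) = S * Real.log (C / s) + Real.log N := by
        rw [Real.log_mul (by positivity) hN.ne', Real.log_pow]
    _ ≤ S * Real.log (C / s) + Real.log (T ^ S) := by gcongr
    _ = _ := by
        rw [Real.log_pow, Real.log_mul hT.ne' hC.ne', Real.log_div hC.ne' hs.ne', one_div,
          Real.log_inv, Real.log_pow]
        ring

theorem spike_slab_kl_bound_general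
    (T S : ℕ) (hS : 1 ≤ S)
    (C_B : ℝ) (s_n : ℝ) (hs : 0 < s_n)
    (θstar : Fin T → ℝ)
    (hsupp : (Finset.univ.filter (fun t => θstar t ≠ 0)).card = S)
    (hbdd : ∀ t, θstar t ≠ 0 → |θstar t| + s_n ≤ C_B)
    (π q : Measure (Fin T → ℝ))
    (hπ : π = ((Finset.univ.filter
          (fun γ : Fin T → Bool => (Finset.univ.filter (fun t => γ t = true)).card = S)).card
            : ℝ≥0∞)⁻¹
        • ∑ γ ∈ Finset.univ.filter
            (fun γ : Fin T → Bool => (Finset.univ.filter (fun t => γ t = true)).card = S),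
          Measure.pi (fun t => if γ t then unifIcc (-C_B) C_B else Measure.dirac 0))
    (hq : q = Measure.pi (fun t =>
        if θstar t = 0 then Measure.dirac 0
        else unifIcc (θstar t - s_n) (θstar t + s_n))) :
    ∫ θ, Real.log ((q.rnDeriv π θ).toReal) ∂q
      ≤ S * Real.log (T * C_B) + (S / 2) * Real.log (1 / s_n ^ 2) := by
  obtain ⟨t₀, ht₀⟩ := card_pos.1 (hsupp ▸ hS)
  have hsC : s_n ≤ C_B := by linarith [hbdd t₀ (mem_filter.1 ht₀).2, abs_nonneg (θstar t₀)]
  set F := univ.filter (fun γ : Fin T → Bool => (univ.filter (fun t => γ t = true)).card = S)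
  have hγ : (fun t => decide (θstar t ≠ 0)) ∈ F := by simpa [F] using hsupp
  have hF₀ : 0 < #F := card_pos.2 ⟨_, hγ⟩
  have hF : #F ≤ T ^ S := by
    simpa [F] using (card_filter_card_eq_choose (ι := Fin T) S).trans_le (Nat.choose_le_pow _ S)
  have : IsProbabilityMeasure (unifIcc (-C_B) C_B) := isProbabilityMeasure_unifIcc (by linarith)
  have : ∀ x, IsProbabilityMeasure (unifIcc (x - s_n) (x + s_n)) :=
    fun x => isProbabilityMeasure_unifIcc (by linarith)
  have : IsProbabilityMeasure π := hπ ▸ Measure.isProbabilityMeasure_inv_card_smul_sum ⟨_, hγ⟩ _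
  have : IsProbabilityMeasure q := hq ▸ inferInstance
  have hqπ : q ≤ ((C_B / s_n).toNNReal ^ S * #F) • π := by
    rw [← smul_smul, hq, ← hsupp]
    refine (pi_ite_unifIcc_le_pow_smul_pi hs hbdd).trans ?_
    gcongr
    rw [← Measure.coe_nnreal_smul, ENNReal.coe_natCast, hπ]
    simpa using Measure.le_card_smul_inv_card_smul_sum hγ
      (fun γ => Measure.pi fun t => if γ t then unifIcc (-C_B) C_B else Measure.dirac 0)
  have hC : 0 < C_B := hs.trans_le hsC
  calc ∫ θ, Real.log (q.rnDeriv π θ).toReal ∂q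
      ≤ Real.log ((C_B / s_n) ^ S * #F) := by
        simpa [Real.coe_toNNReal _ (div_pos hC hs).le] using integral_log_rnDeriv_le_of_le_smul
          (one_le_mul (one_le_pow₀ (by simpa using (one_le_div hs).2 hsC))
            (by exact_mod_cast hF₀)) hqπ
    _ ≤ _ := log_div_pow_mul_le hC hs (by exact_mod_cast t₀.pos)
        (by exact_mod_cast hF₀) (by exact_mod_cast hF)

/-- KL bound for the spike-and-slab prior: with `π` the spike-and-slab prior on `ℝ^T`
(uniform choice of a size-`S` support, uniform `[−C_B, C_B]` slabs) and `q_n*` the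
product of uniforms `U([θ*_t − s_n, θ*_t + s_n])` on the support of `θ*` and point
masses at `0` elsewhere, one has `KL(q_n*, π) ≤ S log(T C_B) + (S/2) log(1/s_n²)`. -/
theorem spike_slab_kl_bound
    (T S : ℕ) (hS : 1 ≤ S) (hST : S ≤ T)
    (C_B : ℝ) (hCB : 2 ≤ C_B) (s_n : ℝ) (hs : 0 < s_n)
    (θstar : Fin T → ℝ)
    (hsupp : (Finset.univ.filter (fun t => θstar t ≠ 0)).card = S)
    (hbdd : ∀ t, θstar t ≠ 0 → |θstar t| + s_n ≤ C_B)
    (π q : Measure (Fin T → ℝ))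
    (hπ : π = ((Finset.univ.filter
          (fun γ : Fin T → Bool => (Finset.univ.filter (fun t => γ t = true)).card = S)).card
            : ℝ≥0∞)⁻¹
        • ∑ γ ∈ Finset.univ.filter
            (fun γ : Fin T → Bool => (Finset.univ.filter (fun t => γ t = true)).card = S),
          Measure.pi (fun t => if γ t then unifIcc (-C_B) C_B else Measure.dirac 0))
    (hq : q = Measure.pi (fun t =>
        if θstar t = 0 then Measure.dirac 0
        else unifIcc (θstar t - s_n) (θstar t + s_n))) :
    ∫ θ, Real.log ((q.rnDeriv π θ).toReal) ∂q
      ≤ S * Real.log (T * C_B) + (S / 2) * Real.log (1 / s_n ^ 2) :=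
  spike_slab_kl_bound_general T S hS C_B s_n hs θstar hsupp hbdd π q hπ hq
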